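/- Let v₁, v₂ ∈ ℝ² be linearly independent vectors and let L = {m·v₁ + n·v₂ : m, n ∈ ℤ} be the lattice they generate. For every lattice point p ∈ L and every integer k ≥ 1, the set R_{≤k}(p) = {x ∈ ℝ² : #{q ∈ L, q ≠ p : ‖x − q‖ < ‖x − p‖} ≤ k − 1}, i.e. the set of points for which p is among the k nearest lattice points, has Lebesgue measure equal to k·|det(v₁, v₂)|. -/

import Mathlib

/-!
Rank the points of the lattice `Λ` by their distance to `x`. For almost every `x` these distances
are pairwise distinct (the exceptions lie on countably many perpendicular bisectors), and then,
since balls contain finitely many lattice points, the rank is a bijection from `Λ` onto `ℕ`: `x`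
lies in the order regions of exactly `k` lattice points. These regions are the `Λ`-translates of
the region of `p`, so unfolding its measure over a fundamental domain `F` gives
`∫_F #{q ∈ Λ | x ∈ R(q)} dx = k · vol F`, and `vol F = |det(v₁, v₂)|`.
-/

open MeasureTheory Set
open scoped Pointwise ENNReal

lemma AddSubgroup.infinite_of_ne_bot {G : Type*} [AddGroup G] [IsAddTorsionFree G]
    {Λ : AddSubgroup G} (hΛ : Λ ≠ ⊥) : (Λ : Set G).Infinite := by
  obtain ⟨⟨v, hv⟩, hv0⟩ := Λ.ne_bot_iff_exists_ne_zero.1 hΛ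
  have hv_infinite : (AddSubgroup.zmultiples v : Set G).Infinite :=
    infinite_zmultiples.2 fun h => hv0 (Subtype.ext ((isOfFinAddOrder_iff_eq_zero v).1 h))
  exact hv_infinite.mono (AddSubgroup.zmultiples_le_of_mem hv)

section Rank

variable {α β : Type*} [LinearOrder β]

-- Only meaningful when the set is finite: `ncard` of an infinite set is `0`.
noncomputable def rankBy (S : Set α) (d : α → β) (q : α) : ℕ :=
  {r ∈ S | d r < d q}.ncard

variable {S : Set α} {d : α → β}

lemma rankBy_le_rankBy (hfin : ∀ c, {r ∈ S | d r ≤ c}.Finite) {q r : α} (h : d q ≤ d r) :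
    rankBy S d q ≤ rankBy S d r :=
  ncard_le_ncard (fun _ ha => ⟨ha.1, ha.2.trans_le h⟩)
    ((hfin (d r)).subset fun _ ha => ⟨ha.1, ha.2.le⟩)

lemma rankBy_lt_rankBy (hfin : ∀ c, {r ∈ S | d r ≤ c}.Finite) {q r : α} (hq : q ∈ S)
    (h : d q < d r) : rankBy S d q < rankBy S d r :=
  ncard_lt_ncard ⟨fun _ ha => ⟨ha.1, ha.2.trans h⟩, fun hsub => (hsub ⟨hq, h⟩).2.false⟩
    ((hfin (d r)).subset fun _ ha => ⟨ha.1, ha.2.le⟩)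

lemma rankBy_injOn (hfin : ∀ c, {r ∈ S | d r ≤ c}.Finite) (hd : InjOn d S) :
    InjOn (rankBy S d) S := by
  intro q hq r hr hqr
  by_contra hne
  rcases lt_or_gt_of_ne (hd.ne hq hr hne) with h | h
  · exact (rankBy_lt_rankBy hfin hq h).ne hqr
  · exact (rankBy_lt_rankBy hfin hr h).ne' hqr

lemma exists_rankBy_eq (hfin : ∀ c, {r ∈ S | d r ≤ c}.Finite) (hd : InjOn d S)
    (hS : S.Infinite) (n : ℕ) : ∃ q ∈ S, rankBy S d q = n := by
  obtain ⟨q, hq, hnq⟩ : ∃ q ∈ S, n ≤ rankBy S d q := by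
    by_contra! h
    exact hS (((finite_Iio n).subset (image_subset_iff.2 h)).of_finite_image
      (rankBy_injOn hfin hd))
  have hI : {r ∈ S | d r ≤ d q} = insert q {r ∈ S | d r < d q} := by
    ext r
    simp only [mem_ofPred_eq, mem_insert_iff]
    exact ⟨fun ⟨hr, h⟩ => h.lt_or_eq.symm.imp (hd hr hq) (⟨hr, ·⟩),
      by rintro (rfl | ⟨hr, h⟩); exacts [⟨hq, le_rfl⟩, ⟨hr, h.le⟩]⟩
  -- Pigeonhole: `rankBy` maps the `rankBy S d q + 1` points of `S` up to `q` injectively into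
  -- `Iic (rankBy S d q)`.
  have himage : rankBy S d '' {r ∈ S | d r ≤ d q} = Iic (rankBy S d q) := by
    refine ((hfin (d q)).image _).eq_of_subset_of_encard_le
      (image_subset_iff.2 fun r hr => rankBy_le_rankBy hfin hr.2) ?_
    rw [((rankBy_injOn hfin hd).mono fun r hr => hr.1).encard_image, hI,
      encard_insert_of_notMem fun h => h.2.false, ← Finset.coe_Iic,
      encard_coe_eq_coe_finsetCard, Nat.card_Iic, rankBy, Nat.cast_add_one,
      ((hfin (d q)).subset fun _ hr => ⟨hr.1, hr.2.le⟩).cast_ncard_eq]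
  obtain ⟨r, hr, hrn⟩ := himage.symm.subset (mem_Iic.2 hnq)
  exact ⟨r, hr.1, hrn⟩

lemma encard_setOf_rankBy_lt (hfin : ∀ c, {r ∈ S | d r ≤ c}.Finite) (hd : InjOn d S)
    (hS : S.Infinite) (k : ℕ) : {q ∈ S | rankBy S d q < k}.encard = k := by
  have himage : rankBy S d '' {q ∈ S | rankBy S d q < k} = Iio k := by
    refine (image_subset_iff.2 fun q hq => hq.2).antisymm fun n hn => ?_
    obtain ⟨q, hq, rfl⟩ := exists_rankBy_eq hfin hd hS n
    exact ⟨q, ⟨hq, hn⟩, rfl⟩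
  rw [← ((rankBy_injOn hfin hd).mono fun q hq => hq.1).encard_image, himage]
  exact Nat.encard_range k

end Rank

section OrderRegion

variable {α : Type*} [PseudoMetricSpace α]

def orderRegion (S : Set α) (k : ℕ) (p : α) : Set α :=
  {x | rankBy S (dist x) p < k}

lemma isClosed_orderRegion {S : Set α} (hfin : ∀ x c, {r ∈ S | dist x r ≤ c}.Finite) (k : ℕ)
    (p : α) : IsClosed (orderRegion S k p) := by
  rw [← isOpen_compl_iff, isOpen_iff_forall_mem_open]
  intro x hx
  have hlower : ∀ y, {r ∈ S | dist y r < dist y p}.Finite := fun y =>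
    (hfin y (dist y p)).subset fun _ hr => ⟨hr.1, hr.2.le⟩
  obtain ⟨t, hts, htk⟩ := exists_subset_card_eq (not_lt.1 hx)
  refine ⟨⋂ r ∈ t, {y | dist y r < dist y p}, fun y hy => ?_,
    ((hlower x).subset hts).isOpen_biInter fun _ _ => isOpen_lt (by fun_prop) (by fun_prop),
    mem_iInter₂.2 fun r hr => (hts hr).2⟩
  have hsub : t ⊆ {r ∈ S | dist y r < dist y p} := fun r hr =>
    ⟨(hts hr).1, mem_iInter₂.1 hy r hr⟩
  exact not_lt.2 (htk ▸ ncard_le_ncard hsub (hlower y))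

end OrderRegion

section Seminormed

variable {E : Type*} [SeminormedAddCommGroup E]

lemma rankBy_dist_add {Λ : AddSubgroup E} {g : E} (hg : g ∈ Λ) (x q : E) :
    rankBy Λ (dist (x + g)) (q + g) = rankBy Λ (dist x) q := by
  rw [rankBy, rankBy, ← ncard_preimage_of_injective_subset_range (add_left_injective g)
    fun r _ => ⟨r - g, sub_add_cancel r g⟩]
  congr 1
  ext r
  simp [Λ.add_mem_cancel_right hg]

lemma orderRegion_add {Λ : AddSubgroup E} {g : E} (hg : g ∈ Λ) (k : ℕ) (p : E) :
    orderRegion Λ k (p + g) = g +ᵥ orderRegion Λ k p := by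
  ext x
  rw [mem_vadd_set_iff_neg_vadd_mem, vadd_eq_add, orderRegion, orderRegion, mem_ofPred_eq,
    mem_ofPred_eq, ← rankBy_dist_add hg (-g + x) p, neg_add_cancel_comm]

lemma orderRegion_eq_setOf_norm_sub (S : Set E) {k : ℕ} (hk : 1 ≤ k) (p : E) :
    orderRegion S k p = {x | {q ∈ S | q ≠ p ∧ ‖x - q‖ < ‖x - p‖}.ncard ≤ k - 1} := by
  ext x
  have hcloser : {q ∈ S | q ≠ p ∧ ‖x - q‖ < ‖x - p‖} = {q ∈ S | dist x q < dist x p} := by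
    ext q
    simp only [mem_ofPred_eq, dist_eq_norm, and_congr_right_iff, and_iff_right_iff_imp]
    rintro - h rfl
    exact h.false
  rw [mem_ofPred_eq, hcloser, ← Nat.lt_iff_le_pred hk]
  rfl

end Seminormed

section Lattice

variable {E : Type*} [NormedAddCommGroup E]

lemma AddSubgroup.finite_setOf_dist_le [ProperSpace E] (Λ : AddSubgroup E) [DiscreteTopology Λ]
    (x : E) (c : ℝ) : {r ∈ (Λ : Set E) | dist x r ≤ c}.Finite :=
  (Metric.finite_isBounded_inter_isClosed DiscreteTopology.isDiscrete Metric.isBounded_closedBall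
    Λ.isClosed_of_discrete).subset fun _ hr => ⟨Metric.mem_closedBall'.2 hr.2, hr.1⟩

lemma tsum_indicator_orderRegion [ProperSpace E] [IsAddTorsionFree E] {Λ : AddSubgroup E}
    [DiscreteTopology Λ] (hΛ : Λ ≠ ⊥) {x : E} (hx : InjOn (dist x) Λ) (k : ℕ) :
    ∑' q : Λ, (orderRegion Λ k (q : E)).indicator (1 : E → ℝ≥0∞) x = k := by
  calc ∑' q : Λ, (orderRegion Λ k (q : E)).indicator (1 : E → ℝ≥0∞) x
      = ∑' q : Λ, {q : Λ | x ∈ orderRegion Λ k (q : E)}.indicator 1 q := by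
        congr 1 with q
    _ = {q : Λ | x ∈ orderRegion Λ k (q : E)}.encard :=
        (tsum_subtype _ _).symm.trans (ENNReal.tsum_set_one _)
    _ = k := by
        have hpre : {q : Λ | x ∈ orderRegion Λ k (q : E)} =
            Subtype.val ⁻¹' {q ∈ (Λ : Set E) | rankBy Λ (dist x) q < k} := by
          ext q
          exact (and_iff_right q.2).symm
        rw [hpre, encard_preimage_of_injective_subset_range Subtype.val_injective
            fun q hq => ⟨⟨q, hq.1⟩, rfl⟩,
          encard_setOf_rankBy_lt (Λ.finite_setOf_dist_le x) hx (Λ.infinite_of_ne_bot hΛ) k]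
        rfl

end Lattice

section Measure

variable {E : Type*} [NormedAddCommGroup E] [InnerProductSpace ℝ E] [FiniteDimensional ℝ E]
  [MeasurableSpace E] [BorelSpace E] (μ : Measure E) [μ.IsAddHaarMeasure]

lemma ae_injOn_dist {S : Set E} (hS : S.Countable) : ∀ᵐ x ∂μ, InjOn (dist x) S := by
  have hbisector : ∀ᵐ x ∂μ, ∀ z ∈ S ×ˢ S, z.1 ≠ z.2 → dist x z.1 ≠ dist x z.2 := by
    refine (ae_ball_iff (hS.prod hS)).2 fun z _ => ?_
    by_cases hz : z.1 = z.2
    · exact Filter.Eventually.of_forall fun _ h => absurd hz h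
    have hnull : μ (AffineSubspace.perpBisector z.1 z.2) = 0 :=
      Measure.addHaar_affineSubspace μ _ (mt AffineSubspace.perpBisector_eq_top.1 hz)
    filter_upwards [measure_eq_zero_iff_ae_notMem.1 hnull] with x hx _ hd
    exact hx (AffineSubspace.mem_perpBisector_iff_dist_eq.2 hd)
  filter_upwards [hbisector] with x hx q hq r hr hqr
  by_contra hne
  exact hx (q, r) ⟨hq, hr⟩ hne hqr

variable {μ}

theorem measure_orderRegion {Λ : AddSubgroup E} [DiscreteTopology Λ] (hΛ : Λ ≠ ⊥) {F : Set E}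
    (hF : IsAddFundamentalDomain Λ F μ) {p : E} (hp : p ∈ Λ) (k : ℕ) :
    μ (orderRegion Λ k p) = k * μ F := by
  have hΛc : Countable Λ := TopologicalSpace.separableSpace_iff_countable.1 inferInstance
  have : IsAddTorsionFree E := .of_isTorsionFree ℝ E
  have hmeas (q : E) : MeasurableSet (orderRegion Λ k q) :=
    (isClosed_orderRegion Λ.finite_setOf_dist_le k q).measurableSet
  have hcount : ∀ᵐ x ∂μ,
      ∑' g : Λ, (orderRegion Λ k (p + g)).indicator (1 : E → ℝ≥0∞) x = k := by
    filter_upwards [ae_injOn_dist μ (countable_coe_iff.1 hΛc)] with x hx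
    rw [← tsum_indicator_orderRegion hΛ hx k]
    exact (Equiv.addLeft (⟨p, hp⟩ : Λ)).tsum_eq fun q : Λ =>
      (orderRegion Λ k (q : E)).indicator (1 : E → ℝ≥0∞) x
  calc μ (orderRegion Λ k p)
      = ∑' g : Λ, μ ((g +ᵥ orderRegion Λ k p) ∩ F) := hF.measure_eq_tsum _
    _ = ∑' g : Λ, ∫⁻ x in F, (orderRegion Λ k (p + g)).indicator 1 x ∂μ := by
        congr 1 with g
        rw [lintegral_indicator_one (hmeas _), Measure.restrict_apply (hmeas _),
          orderRegion_add g.2]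
        rfl
    _ = ∫⁻ x in F, ∑' g : Λ, (orderRegion Λ k (p + g)).indicator 1 x ∂μ :=
        (lintegral_tsum fun g => (measurable_one.indicator (hmeas _)).aemeasurable).symm
    _ = ∫⁻ _ in F, (k : ℝ≥0∞) ∂μ := lintegral_congr_ae (ae_restrict_of_ae hcount)
    _ = k * μ F := setLIntegral_const F k

end Measure

lemma EuclideanSpace.volume_fundamentalDomain {ι : Type*} [Fintype ι] [DecidableEq ι]
    (b : Module.Basis ι ℝ (EuclideanSpace ℝ ι)) :
    volume (ZSpan.fundamentalDomain b) = ENNReal.ofReal |(Matrix.of fun i j => b i j).det| := by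
  rw [measure_congr (ZSpan.fundamentalDomain_ae_parallelepiped b volume),
    ← (EuclideanSpace.basisFun ι ℝ).addHaar_eq_volume, Measure.addHaar_parallelepiped,
    Module.Basis.det_apply, ← Matrix.det_transpose]
  congr 3

open Submodule in
/-- In the lattice generated by linearly independent `v₁, v₂ ∈ ℝ²`, the set of points for
which a lattice point `p` is among the `k` nearest lattice points has Lebesgue measure
`k·|det(v₁, v₂)|`. -/
theorem stmt_3 (v₁ v₂ : EuclideanSpace ℝ (Fin 2))
    (hindep : LinearIndependent ℝ ![v₁, v₂])
    (L : Set (EuclideanSpace ℝ (Fin 2)))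
    (hL : L = {q | ∃ m n : ℤ, q = m • v₁ + n • v₂})
    (p : EuclideanSpace ℝ (Fin 2)) (hp : p ∈ L) (k : ℕ) (hk : 1 ≤ k) :
    volume {x : EuclideanSpace ℝ (Fin 2) |
        {q ∈ L | q ≠ p ∧ ‖x - q‖ < ‖x - p‖}.ncard ≤ k - 1}
      = ENNReal.ofReal ((k : ℝ) * |v₁ 0 * v₂ 1 - v₁ 1 * v₂ 0|) := by
  obtain ⟨b, hb⟩ : ∃ b : Module.Basis (Fin 2) ℝ (EuclideanSpace ℝ (Fin 2)), ⇑b = ![v₁, v₂] :=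
    ⟨_, coe_basisOfLinearIndependentOfCardEqFinrank hindep (by simp)⟩
  have hLΛ : L = (span ℤ (range b)).toAddSubgroup := by
    ext q
    rw [hL, mem_ofPred_eq, SetLike.mem_coe, mem_toAddSubgroup, hb, Matrix.range_cons_cons_empty,
      mem_span_pair]
    simp only [eq_comm]
  have hΛ : (span ℤ (range b)).toAddSubgroup ≠ ⊥ := fun h => b.ne_zero 0 <| by
    have hb0 : b 0 ∈ (span ℤ (range b)).toAddSubgroup := subset_span (mem_range_self 0)
    rwa [h, AddSubgroup.mem_bot] at hb0
  rw [hLΛ] at hp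
  rw [← orderRegion_eq_setOf_norm_sub L hk, hLΛ,
    measure_orderRegion hΛ (ZSpan.isAddFundamentalDomain' b volume) hp k,
    EuclideanSpace.volume_fundamentalDomain, Matrix.det_fin_two,
    ENNReal.ofReal_mul (by positivity), ENNReal.ofReal_natCast]
  simp [hb]
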